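/- Let (λ(n)) be complex numbers satisfying Σ_{n ≤ x} |λ(n)|² = C·x + O(x^{3/5}) for some constant C > 0, and suppose λ(n) = 0 for 1 < n < n₀ where n₀ ≥ 2 and λ(n₀) ≠ 0. Then for every fixed integer m ≥ 1, as σ → 1/2⁺, Σ_{n≥1} |λ(n)|² (log n)^{2m} / n^{2σ} = ((2m)! · n₀ · C / n₀^{2σ}) · (2σ−1)^{−(2m+1)} + O((2σ−1)^{−2m}). -/

import Mathlib

/-!
Partial summation against `S(t) = ∑_{n ≤ t} |λ(n)|²` writes the series as `-∫_1^∞ f'(t) S(t) dt`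
with `f(t) = (log t)^k t^{-s}`, `k = 2m`, `s = 2σ`. Splitting `S(t) = C t + E(t)`, the main part is
`C (f(1) + ∫_1^∞ f) = C (0^k + k!/(s-1)^{k+1})` (by parts, then `t = e^u` turns `∫_1^∞ f` into a
Gamma integral), while `E(t) = O(t^{3/5})` contributes `O(1)` uniformly for `1 < s ≤ 2`.
Finally `n₀^{1-s} = 1 + O(s - 1)`, so replacing `C k!/(s-1)^{k+1}` by `n₀^{1-s}` times it costs
`O((s-1)^{-k})`.
-/

open Real Finset MeasureTheory Set Filter Topology Asymptotics
open scoped Nat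

theorem inv_smul_log_pow_mul_exp_eq {k : ℕ} {p x : ℝ} (hx : 0 < x) :
    x⁻¹ • (log x ^ k * exp (-((p - 1) * log x))) = log x ^ k * x ^ (-p) := by
  rw [smul_eq_mul, show -((p - 1) * log x) = log x * (1 - p) by ring, ← rpow_def_of_pos hx,
    mul_left_comm, ← rpow_neg_one, ← rpow_add hx]
  ring_nf

theorem integrableOn_log_pow_mul_rpow_neg (k : ℕ) {p : ℝ} (hp : 1 < p) :
    IntegrableOn (fun t : ℝ ↦ log t ^ k * t ^ (-p)) (Ioi 1) := by
  have h := integrableOn_rpow_mul_exp_neg_mul_rpow (s := k) (p := 1) (b := p - 1)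
    (by linarith [k.cast_nonneg (α := ℝ)]) one_pos (by linarith)
  simp only [rpow_natCast, rpow_one, neg_mul] at h
  rw [← log_one, ← integrableOn_comp_log_Ioi _ one_pos] at h
  exact h.congr_fun (fun x hx ↦ inv_smul_log_pow_mul_exp_eq (one_pos.trans hx)) measurableSet_Ioi

theorem integral_log_pow_mul_rpow_neg (k : ℕ) {p : ℝ} (hp : 1 < p) :
    ∫ t in Ioi 1, log t ^ k * t ^ (-p) = k ! / (p - 1) ^ (k + 1) := by
  have h := integral_rpow_mul_exp_neg_mul_Ioi (a := k + 1) (r := p - 1) (by positivity)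
    (by linarith)
  rw [add_sub_cancel_right, Gamma_nat_eq_factorial, ← Nat.cast_succ, rpow_natCast] at h
  simp only [rpow_natCast] at h
  rw [← setIntegral_congr_fun measurableSet_Ioi
    (fun x hx ↦ inv_smul_log_pow_mul_exp_eq (k := k) (p := p) (one_pos.trans hx)),
    integral_comp_log_Ioi (fun y ↦ y ^ k * exp (-((p - 1) * y))) one_pos, log_one, h,
    Nat.succ_eq_add_one, one_div_pow, one_div, inv_mul_eq_div]

theorem integrableOn_log_pow_combination_mul_rpow_neg (k : ℕ) (b c : ℝ) {p : ℝ} (hp : 1 < p) :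
    IntegrableOn (fun t : ℝ ↦ (b * log t ^ (k - 1) + c * log t ^ k) * t ^ (-p)) (Ioi 1) :=
  IntegrableOn.congr_fun (((integrableOn_log_pow_mul_rpow_neg (k - 1) hp).const_mul b).add
    ((integrableOn_log_pow_mul_rpow_neg k hp).const_mul c))
    (fun t _ ↦ by simp only [Pi.add_apply]; ring) measurableSet_Ioi

theorem tendsto_log_pow_mul_rpow_neg_atTop (k : ℕ) {a : ℝ} (ha : 0 < a) :
    Tendsto (fun t : ℝ ↦ log t ^ k * t ^ (-a)) atTop (𝓝 0) := by
  refine (isLittleO_log_rpow_rpow_atTop k ha).tendsto_div_nhds_zero.congr' ?_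
  filter_upwards [eventually_gt_atTop 0] with t ht
  rw [rpow_natCast, rpow_neg ht.le, div_eq_mul_inv]

noncomputable def logWeight (k : ℕ) (s t : ℝ) : ℝ := log t ^ k * t ^ (-s)

section logWeight

variable (k : ℕ) {t : ℝ}

theorem hasDerivAt_logWeight (s : ℝ) (ht : 0 < t) :
    HasDerivAt (logWeight k s) ((k * log t ^ (k - 1) - s * log t ^ k) * t ^ (-s - 1)) t := by
  have h : HasDerivAt (fun u ↦ log u ^ k * u ^ (-s)) _ t :=
    ((hasDerivAt_log ht.ne').pow k).mul (hasDerivAt_rpow_const (p := -s) (Or.inl ht.ne'))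
  refine h.congr_deriv ?_
  rw [Pi.pow_apply, rpow_sub_one ht.ne']
  field_simp
  ring

theorem deriv_logWeight (s : ℝ) (ht : 0 < t) :
    deriv (logWeight k s) t = (k * log t ^ (k - 1) - s * log t ^ k) * t ^ (-s - 1) :=
  (hasDerivAt_logWeight k s ht).deriv

theorem abs_deriv_logWeight_le {s : ℝ} (hs : 0 ≤ s) (ht : 1 ≤ t) :
    |deriv (logWeight k s) t| ≤ (k * log t ^ (k - 1) + s * log t ^ k) * t ^ (-s - 1) := by
  have hlog := log_nonneg ht
  have h₁ : 0 ≤ k * log t ^ (k - 1) := by positivity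
  have h₂ : 0 ≤ s * log t ^ k := by positivity
  rw [deriv_logWeight k s (one_pos.trans_le ht), abs_mul,
    abs_of_pos (rpow_pos_of_pos (one_pos.trans_le ht) _)]
  gcongr
  exact abs_sub_le_iff.2 ⟨by linarith, by linarith⟩

theorem continuousOn_deriv_logWeight (s : ℝ) : ContinuousOn (deriv (logWeight k s)) (Ioi 0) := by
  refine ContinuousOn.congr ?_ fun t ht ↦ deriv_logWeight k s ht
  have : ∀ t ∈ Ioi (0 : ℝ), t ≠ 0 := fun t ht ↦ ht.ne'
  fun_prop (disch := assumption)

theorem integrableOn_deriv_logWeight_mul_self {s : ℝ} (hs : 1 < s) :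
    IntegrableOn (fun t ↦ deriv (logWeight k s) t * t) (Ioi 1) := by
  refine (integrableOn_log_pow_combination_mul_rpow_neg k k (-s) hs).congr_fun (fun t ht ↦ ?_)
    measurableSet_Ioi
  have ht : (0 : ℝ) < t := one_pos.trans ht
  rw [deriv_logWeight k s ht, mul_assoc, ← rpow_add_one ht.ne']
  ring_nf

theorem integral_deriv_logWeight_mul_self {s : ℝ} (hs : 1 < s) :
    ∫ t in Ioi 1, deriv (logWeight k s) t * t = -(0 ^ k + k ! / (s - 1) ^ (k + 1)) := by
  have hF : ∀ t ∈ Ici (1 : ℝ), HasDerivAt (fun t ↦ logWeight k s t * t)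
      (deriv (logWeight k s) t * t + logWeight k s t) t := fun t ht ↦ by
    have h := (hasDerivAt_logWeight k s (one_pos.trans_le ht)).mul (hasDerivAt_id' t)
    rwa [← deriv_logWeight k s (one_pos.trans_le ht), mul_one] at h
  have hlim : Tendsto (fun t ↦ logWeight k s t * t) atTop (𝓝 0) := by
    refine (tendsto_log_pow_mul_rpow_neg_atTop k (a := s - 1) (by linarith)).congr' ?_
    filter_upwards [eventually_gt_atTop 0] with t ht
    rw [logWeight, mul_assoc, ← rpow_add_one ht.ne']
    ring_nf
  have hf : IntegrableOn (logWeight k s) (Ioi 1) := integrableOn_log_pow_mul_rpow_neg k hs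
  have hFTC := integral_Ioi_of_hasDerivAt_of_tendsto' hF
    ((integrableOn_deriv_logWeight_mul_self k hs).add hf) hlim
  rw [integral_add (integrableOn_deriv_logWeight_mul_self k hs) hf] at hFTC
  simp only [logWeight, log_one, one_rpow, mul_one] at hFTC
  rw [integral_log_pow_mul_rpow_neg k hs] at hFTC
  linarith

end logWeight

theorem sum_Icc_zero_ite_eq_sum_Icc_one (a : ℕ → ℝ) (N : ℕ) :
    ∑ n ∈ Icc 0 N, (if n = 0 then 0 else a n) = ∑ n ∈ Icc 1 N, a n := by
  rw [← add_sum_Ioc_eq_sum_Icc N.zero_le, if_pos rfl, zero_add, ← Finset.Icc_add_one_left_eq_Ioc]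
  exact sum_congr rfl fun n hn ↦ if_neg (by simp at hn; omega)

theorem hasSum_mul_log_pow_div_rpow {a : ℕ → ℝ} (ha : ∀ n, 0 ≤ a n) (k : ℕ) {s : ℝ}
    (hs : 1 < s) (hS : (fun t : ℝ ↦ ∑ n ∈ Icc 1 ⌊t⌋₊, a n) =O[atTop] id) :
    HasSum (fun n : ℕ ↦ a n * log n ^ k / n ^ s)
      (-∫ t in Ioi 1, deriv (logWeight k s) t * ∑ n ∈ Icc 1 ⌊t⌋₊, a n) := by
  -- Mathlib's partial summation sums over `Icc 0 n` and needs `c 0 = 0`; the `n = 0` term of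
  -- the series vanishes anyway, as `0 ^ s = 0` and division by `0` gives `0`.
  set c : ℕ → ℝ := fun n ↦ if n = 0 then 0 else a n
  have hterm : ∀ n : ℕ, a n * log n ^ k / n ^ s = logWeight k s n * c n := by
    rintro (_ | n)
    · simp [c, zero_rpow (by linarith : s ≠ 0)]
    · simp only [c, logWeight, if_neg n.succ_ne_zero, rpow_neg (Nat.cast_nonneg _)]
      ring
  have hS' : (fun t : ℝ ↦ ∑ n ∈ Icc 0 ⌊t⌋₊, c n) =O[atTop] id := by
    simpa only [c, sum_Icc_zero_ite_eq_sum_Icc_one] using hS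
  have hdiff : ∀ t ∈ Ici (1 : ℝ), DifferentiableAt ℝ (logWeight k s) t := fun t ht ↦
    (hasDerivAt_logWeight k s (one_pos.trans_le ht)).differentiableAt
  have hint : LocallyIntegrableOn (deriv (logWeight k s)) (Ici 1) :=
    ((continuousOn_deriv_logWeight k s).mono fun _ ht ↦ one_pos.trans_le (Set.mem_Ici.1 ht)
      ).locallyIntegrableOn measurableSet_Ici
  have hlim : Tendsto (fun n : ℕ ↦ logWeight k s n * ∑ i ∈ Icc 0 n, c i) atTop (𝓝 0) := by
    have h := ((isBigO_refl (logWeight k s) atTop).mul hS').trans_tendsto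
      ((tendsto_log_pow_mul_rpow_neg_atTop k (a := s - 1) (by linarith)).congr' ?_)
    · simpa only [Function.comp_def, Nat.floor_natCast] using h.comp tendsto_natCast_atTop_atTop
    filter_upwards [eventually_gt_atTop 0] with t ht
    rw [id, logWeight, mul_assoc, ← rpow_add_one ht.ne']
    ring_nf
  have h := tendsto_sum_mul_atTop_nhds_one_sub_integral₀ c (if_pos rfl) hdiff hint hlim
    ((isBigO_refl _ atTop).mul hS')
    ⟨Ioi 1, Ioi_mem_atTop 1, integrableOn_deriv_logWeight_mul_self k hs⟩
  have hnonneg : ∀ n : ℕ, 0 ≤ a n * log n ^ k / n ^ s := fun n ↦ by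
    have := log_natCast_nonneg n
    have := ha n
    positivity
  rw [hasSum_iff_tendsto_nat_of_nonneg hnonneg, ← tendsto_add_atTop_iff_nat 1]
  simp only [Nat.range_succ_eq_Icc_zero, hterm]
  simpa only [zero_sub, c, sum_Icc_zero_ite_eq_sum_Icc_one] using h

theorem exists_abs_integral_deriv_logWeight_mul_le (k : ℕ) {E : ℝ → ℝ} {A θ : ℝ} (hθ : θ < 1)
    (hE_meas : Measurable E) (hE : ∀ t, 1 ≤ t → |E t| ≤ A * t ^ θ) :
    ∃ K, ∀ s, 1 < s → s ≤ 2 →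
      IntegrableOn (fun t ↦ deriv (logWeight k s) t * E t) (Ioi 1) ∧
        |∫ t in Ioi 1, deriv (logWeight k s) t * E t| ≤ K := by
  set M : ℝ → ℝ := fun t ↦ (A * k * log t ^ (k - 1) + A * 2 * log t ^ k) * t ^ (-(2 - θ))
  have hM : IntegrableOn M (Ioi 1) :=
    integrableOn_log_pow_combination_mul_rpow_neg k _ _ (by linarith)
  refine ⟨∫ t in Ioi 1, M t, fun s hs hs₂ ↦ ?_⟩
  have hbound : ∀ t ∈ Ioi (1 : ℝ), ‖deriv (logWeight k s) t * E t‖ ≤ M t := by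
    intro t ht
    have ht : 1 ≤ t := le_of_lt ht
    have hlog := log_nonneg ht
    have hEt : 0 ≤ A * t ^ θ := (abs_nonneg _).trans (hE t ht)
    have hpow : t ^ (-2 : ℝ) * t ^ θ = t ^ (-(2 - θ)) := by
      rw [← rpow_add (by linarith)]
      ring_nf
    rw [norm_mul, norm_eq_abs, norm_eq_abs]
    calc |deriv (logWeight k s) t| * |E t|
        ≤ ((k * log t ^ (k - 1) + s * log t ^ k) * t ^ (-s - 1)) * (A * t ^ θ) :=
          mul_le_mul (abs_deriv_logWeight_le k (by linarith) ht) (hE t ht) (abs_nonneg _)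
            (by positivity)
      _ ≤ ((k * log t ^ (k - 1) + 2 * log t ^ k) * t ^ (-2 : ℝ)) * (A * t ^ θ) := by
          gcongr
          linarith
      _ = M t := by
          simp only [M]
          rw [← hpow]
          ring
  have hbound_ae := ae_restrict_of_forall_mem (μ := volume) measurableSet_Ioi hbound
  exact ⟨hM.mono' ((measurable_deriv _).mul hE_meas).aestronglyMeasurable hbound_ae,
    norm_eq_abs _ ▸ norm_integral_le_of_norm_le hM hbound_ae⟩

theorem isBigO_id_of_abs_sub_mul_le_rpow {f : ℝ → ℝ} {C A θ : ℝ} (hθ : θ ≤ 1)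
    (hf : ∀ t, 1 ≤ t → |f t - C * t| ≤ A * t ^ θ) : f =O[atTop] id := by
  refine IsBigO.of_bound (|C| + |A|) ?_
  filter_upwards [eventually_ge_atTop 1] with t ht
  have ht₀ : 0 ≤ t := by linarith
  have hpow : t ^ θ ≤ t := by simpa using rpow_le_rpow_of_exponent_le ht hθ
  rw [norm_eq_abs, id, norm_eq_abs, abs_of_nonneg ht₀]
  calc |f t| ≤ |f t - C * t| + |C * t| := by linarith [abs_sub_abs_le_abs_sub (f t) (C * t)]
    _ ≤ |A| * t + |C| * t := by
        rw [abs_mul, abs_of_nonneg ht₀]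
        gcongr
        exact (hf t ht).trans (by gcongr; exact le_abs_self A)
    _ = (|C| + |A|) * t := by ring

theorem exists_abs_tsum_mul_log_pow_div_rpow_sub_le {a : ℕ → ℝ} (ha : ∀ n, 0 ≤ a n)
    {C A θ : ℝ} (hθ : θ < 1) (hS : ∀ t : ℝ, 1 ≤ t → |∑ n ∈ Icc 1 ⌊t⌋₊, a n - C * t| ≤ A * t ^ θ)
    (k : ℕ) :
    ∃ K, ∀ s, 1 < s → s ≤ 2 →
      |∑' n : ℕ, a n * log n ^ k / n ^ s - k ! * C / (s - 1) ^ (k + 1)| ≤ K := by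
  set S : ℝ → ℝ := fun t ↦ ∑ n ∈ Icc 1 ⌊t⌋₊, a n
  have hS_meas : Measurable S :=
    (measurable_from_nat (f := fun N ↦ ∑ n ∈ Icc 1 N, a n)).comp Nat.measurable_floor
  obtain ⟨K, hK⟩ := exists_abs_integral_deriv_logWeight_mul_le k (E := fun t ↦ S t - C * t) hθ
    (hS_meas.sub (measurable_const.mul measurable_id)) hS
  refine ⟨|C| + K, fun s hs hs₂ ↦ ?_⟩
  obtain ⟨hE_int, hE_le⟩ := hK s hs hs₂
  have hsplit : ∫ t in Ioi 1, deriv (logWeight k s) t * S t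
      = C * (∫ t in Ioi 1, deriv (logWeight k s) t * t)
        + ∫ t in Ioi 1, deriv (logWeight k s) t * (S t - C * t) := by
    rw [← integral_const_mul,
      ← integral_add ((integrableOn_deriv_logWeight_mul_self k hs).const_mul C) hE_int]
    exact integral_congr_ae (ae_of_all _ fun t ↦ by ring)
  rw [(hasSum_mul_log_pow_div_rpow ha k hs
      (isBigO_id_of_abs_sub_mul_le_rpow hθ.le hS)).tsum_eq, hsplit,
    integral_deriv_logWeight_mul_self k hs]
  have h0 : |C * 0 ^ k| ≤ |C| := by
    rw [abs_mul]
    exact mul_le_of_le_one_right (abs_nonneg C) (by rcases k with _ | k <;> simp)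
  calc _ = |C * 0 ^ k - ∫ t in Ioi 1, deriv (logWeight k s) t * (S t - C * t)| := by
        congr 1; ring
    _ ≤ |C| + K := (abs_sub _ _).trans (add_le_add h0 hE_le)

theorem abs_one_sub_div_rpow_le {x s : ℝ} (hx : 1 ≤ x) (hs : 1 ≤ s) :
    |1 - x / x ^ s| ≤ (s - 1) * log x := by
  have hx₀ : 0 < x := by linarith
  have hy : 1 ≤ x ^ (s - 1) := one_le_rpow hx (by linarith)
  have hdiv : x / x ^ s = (x ^ (s - 1))⁻¹ := by
    rw [rpow_sub_one hx₀.ne', inv_div]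
  rw [hdiv, abs_of_nonneg (sub_nonneg.2 (inv_le_one_of_one_le₀ hy)), ← log_rpow hx₀]
  exact one_sub_inv_le_log_of_pos (by linarith)

theorem abs_div_pow_sub_mul_div_rpow_div_pow_le (c : ℝ) (k : ℕ) {x s : ℝ} (hx : 1 ≤ x)
    (hs : 1 < s) :
    |c / (s - 1) ^ (k + 1) - c * x / x ^ s / (s - 1) ^ (k + 1)| ≤ |c| * log x / (s - 1) ^ k := by
  have hs₀ : 0 < s - 1 := by linarith
  rw [← sub_div, mul_div_assoc, ← mul_one_sub, abs_div, abs_mul, abs_of_pos (pow_pos hs₀ _),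
    pow_succ, div_le_div_iff₀ (by positivity) (pow_pos hs₀ _)]
  calc |c| * |1 - x / x ^ s| * (s - 1) ^ k ≤ |c| * ((s - 1) * log x) * (s - 1) ^ k := by
        gcongr
        exact abs_one_sub_div_rpow_le hx hs.le
    _ = |c| * log x * ((s - 1) ^ k * (s - 1)) := by ring

theorem weighted_mean_square_asymptotic_general (lam : ℕ → ℂ) (C : ℝ)
    (hrankin : ∃ A : ℝ, ∀ x : ℝ, 1 ≤ x →
      |(∑ n ∈ Finset.Icc 1 ⌊x⌋₊, ‖lam n‖ ^ 2) - C * x| ≤ A * x ^ ((3 : ℝ) / 5))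
    (n₀ : ℕ) (hn₀ : 2 ≤ n₀)
    (m : ℕ) :
    ∃ B : ℝ, 0 < B ∧ ∃ σ₀ : ℝ, 1 / 2 < σ₀ ∧ ∀ σ : ℝ, 1 / 2 < σ → σ < σ₀ →
      |(∑' n : ℕ, ‖lam n‖ ^ 2 * Real.log n ^ (2 * m) / (n : ℝ) ^ (2 * σ)) -
          ((2 * m).factorial : ℝ) * (n₀ : ℝ) * C / (n₀ : ℝ) ^ (2 * σ) /
            (2 * σ - 1) ^ (2 * m + 1)| ≤
        B / (2 * σ - 1) ^ (2 * m) := by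
  obtain ⟨A, hA⟩ := hrankin
  obtain ⟨K, hK⟩ := exists_abs_tsum_mul_log_pow_div_rpow_sub_le (fun n ↦ sq_nonneg ‖lam n‖)
    (by norm_num) hA (2 * m)
  have hn₀' : (1 : ℝ) ≤ n₀ := by exact_mod_cast (by omega : 1 ≤ n₀)
  have hlog : 0 ≤ log n₀ := log_nonneg hn₀'
  refine ⟨|K| + |(2 * m)! * C| * log n₀ + 1, by positivity, 1, by norm_num, fun σ hσ hσ₁ ↦ ?_⟩
  have hs : 0 < 2 * σ - 1 := by linarith
  have hpow : (2 * σ - 1) ^ (2 * m) ≤ 1 := pow_le_one₀ hs.le (by linarith)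
  have hK' : K ≤ |K| / (2 * σ - 1) ^ (2 * m) :=
    (le_abs_self K).trans (le_div_self (abs_nonneg K) (pow_pos hs _) hpow)
  rw [mul_right_comm]
  calc _ ≤ K + |(2 * m)! * C| * log n₀ / (2 * σ - 1) ^ (2 * m) :=
        (abs_sub_le _ _ _).trans (add_le_add (hK _ (by linarith) (by linarith))
          (abs_div_pow_sub_mul_div_rpow_div_pow_le _ _ hn₀' (by linarith)))
    _ ≤ (|K| + |(2 * m)! * C| * log n₀ + 1) / (2 * σ - 1) ^ (2 * m) := by
        rw [add_div, add_div]
        linarith [div_nonneg zero_le_one (pow_pos hs (2 * m)).le]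

theorem weighted_mean_square_asymptotic (lam : ℕ → ℂ) (C : ℝ) (hC : 0 < C)
    (hrankin : ∃ A : ℝ, ∀ x : ℝ, 1 ≤ x →
      |(∑ n ∈ Finset.Icc 1 ⌊x⌋₊, ‖lam n‖ ^ 2) - C * x| ≤ A * x ^ ((3 : ℝ) / 5))
    (n₀ : ℕ) (hn₀ : 2 ≤ n₀) (hne : lam n₀ ≠ 0)
    (hvanish : ∀ n : ℕ, 1 < n → n < n₀ → lam n = 0)
    (m : ℕ) (hm : 1 ≤ m) :
    ∃ B : ℝ, 0 < B ∧ ∃ σ₀ : ℝ, 1 / 2 < σ₀ ∧ ∀ σ : ℝ, 1 / 2 < σ → σ < σ₀ →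
      |(∑' n : ℕ, ‖lam n‖ ^ 2 * Real.log n ^ (2 * m) / (n : ℝ) ^ (2 * σ)) -
          ((2 * m).factorial : ℝ) * (n₀ : ℝ) * C / (n₀ : ℝ) ^ (2 * σ) /
            (2 * σ - 1) ^ (2 * m + 1)| ≤
        B / (2 * σ - 1) ^ (2 * m) :=
  weighted_mean_square_asymptotic_general lam C hrankin n₀ hn₀ m
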